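/- Hypergeometric expression of the attractor: for every real U, φ(U) = (Γ(5/4)/π) · Σ_{k≥0} (U/4)^{4k} / ((1/2)_k · (3/4)_k · k!) − (U²·Γ(3/4)/(8π)) · Σ_{k≥0} (U/4)^{4k} / ((5/4)_k · (3/2)_k · k!), where (a)_k = a(a+1)···(a+k−1) denotes the Pochhammer rising factorial and Γ is the Gamma function; both series converge absolutely for every U. -/

import Mathlib

/-!
Expand `cos (Q U)` in its Taylor series and integrate term by term against `exp (-Q⁴)`; this is
legitimate because `∑ U²ⁿ / (2n)! ∫ Q²ⁿ exp (-Q⁴) dQ` converges, the moments being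
`Γ((2n+1)/4) / 2`. Splitting the resulting series into even and odd `n`, Gauss's multiplication
formula `(4k + r)! = r! 4⁴ᵏ ∏ⱼ ((r+j+1)/4)ₖ` together with `Γ(a + k) = (a)ₖ Γ(a)` turns the even
half into the first `₀H₂` series and the odd half into the second.
-/

open MeasureTheory Real

/-- The universal self-similar attractor `φ(U) = (1/(2π)) ∫ Q, exp(−Q⁴) cos(Q U)`. -/
noncomputable def phiFn (U : ℝ) : ℝ :=
  (1 / (2 * Real.pi)) * ∫ Q : ℝ, Real.exp (-Q ^ 4) * Real.cos (Q * U)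

/-- Term of the first `₀H₂({1/2, 3/4}, (U/4)⁴)` hypergeometric series, with the Pochhammer
rising factorial `(a)_k` given by `ascPochhammer`. -/
noncomputable def hyperTerm₁ (U : ℝ) (k : ℕ) : ℝ :=
  (U / 4) ^ (4 * k) /
    ((ascPochhammer ℝ k).eval (1 / 2) * (ascPochhammer ℝ k).eval (3 / 4) * (k.factorial : ℝ))

/-- Term of the second `₀H₂({5/4, 3/2}, (U/4)⁴)` hypergeometric series. -/
noncomputable def hyperTerm₂ (U : ℝ) (k : ℕ) : ℝ :=
  (U / 4) ^ (4 * k) /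
    ((ascPochhammer ℝ k).eval (5 / 4) * (ascPochhammer ℝ k).eval (3 / 2) * (k.factorial : ℝ))

open Set Finset
open scoped Nat

theorem Real.Gamma_add_nat_eq_ascPochhammer_mul {x : ℝ} (hx : ∀ n : ℕ, x + n ≠ 0) (k : ℕ) :
    Gamma (x + k) = (ascPochhammer ℝ k).eval x * Gamma x := by
  induction k with
  | zero => simp
  | succ k ih =>
    rw [Nat.cast_succ, ← add_assoc, Gamma_add_one (hx k), ih, ascPochhammer_succ_eval]
    ring

theorem ascPochhammer_eval_le_eval {S : Type*} [Semiring S] [PartialOrder S]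
    [IsStrictOrderedRing S] (n : ℕ) {s t : S} (hs : 0 < s) (hst : s ≤ t) :
    (ascPochhammer S n).eval s ≤ (ascPochhammer S n).eval t := by
  induction n with
  | zero => simp
  | succ n ih =>
    simp only [ascPochhammer_succ_eval]
    exact mul_le_mul ih (add_le_add_left hst _) (add_nonneg hs.le n.cast_nonneg)
      (ascPochhammer_pos n t (hs.trans_le hst)).le

theorem factorial_mul_add_eq_prod_ascPochhammer (m k r : ℕ) :
    ((m * k + r)! : ℝ) =
      r ! * (m : ℝ) ^ (m * k) *
        ∏ j ∈ range m, (ascPochhammer ℝ k).eval ((r + j + 1 : ℝ) / m) := by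
  rcases Nat.eq_zero_or_pos m with rfl | hm
  · simp
  induction k with
  | zero => simp
  | succ k ih =>
    have hm' : (m : ℝ) ≠ 0 := by positivity
    have hstep (j : ℕ) : ((m * k + r + j + 1 : ℕ) : ℝ) = m * ((r + j + 1 : ℝ) / m + k) := by
      push_cast
      field_simp
      ring
    calc ((m * (k + 1) + r)! : ℝ)
        = (m * k + r)! * ∏ j ∈ range m, ((m * k + r + j + 1 : ℕ) : ℝ) := by
          rw [show m * (k + 1) + r = m * k + r + m by ring, ← Nat.factorial_mul_ascFactorial,
            Nat.ascFactorial_eq_prod_range]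
          push_cast
          exact congrArg _ (prod_congr rfl fun j _ => by ring)
      _ = r ! * (m : ℝ) ^ (m * (k + 1)) * ∏ j ∈ range m,
            ((ascPochhammer ℝ k).eval ((r + j + 1 : ℝ) / m) * ((r + j + 1 : ℝ) / m + k)) := by
          simp only [ih, hstep, prod_mul_distrib, prod_const, card_range]
          ring
      _ = _ := by simp only [ascPochhammer_succ_eval]

theorem Real.Gamma_le_factorial {x : ℝ} {n : ℕ} (hx : 2 ≤ x) (hxn : x ≤ n + 1) :
    Gamma x ≤ n ! := by
  rw [← Gamma_nat_eq_factorial]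
  exact Gamma_strictMonoOn_Ici.monotoneOn hx (hx.trans hxn) hxn

theorem integrable_of_integrableOn_Ioi_of_even {E : Type*} [NormedAddCommGroup E] {f : ℝ → E}
    (hf : ∀ x, f (-x) = f x) (hIoi : IntegrableOn f (Ioi 0)) : Integrable f := by
  have hIic : IntegrableOn f (Iic 0) := by
    have hneg : MeasurableEmbedding fun x : ℝ => -x := (Homeomorph.neg ℝ).measurableEmbedding
    rw [← Measure.map_neg_eq_self (volume : Measure ℝ), hneg.integrableOn_map_iff]
    simpa [Function.comp_def, hf] using (integrableOn_Ici_iff_integrableOn_Ioi (f := f)).mpr hIoi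
  simpa using hIic.union hIoi

theorem integral_Ioi_pow_mul_exp_neg_pow (n : ℕ) {p : ℕ} (hp : 0 < p) :
    ∫ x in Ioi (0 : ℝ), x ^ n * exp (-x ^ p) = Gamma ((n + 1) / p) / p := by
  have h := integral_rpow_mul_exp_neg_rpow (p := p) (q := n) (by positivity)
    (by linarith [n.cast_nonneg (α := ℝ)])
  simp only [rpow_natCast] at h
  rw [h]
  ring

theorem integrableOn_Ioi_pow_mul_exp_neg_pow (n : ℕ) {p : ℕ} (hp : 0 < p) :
    IntegrableOn (fun x : ℝ => x ^ n * exp (-x ^ p)) (Ioi 0) := by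
  simpa only [rpow_natCast] using
    integrableOn_rpow_mul_exp_neg_rpow (s := n) (p := p) (by linarith [n.cast_nonneg (α := ℝ)])
      (by positivity)

theorem integrable_pow_mul_exp_neg_pow {n p : ℕ} (hn : Even n) (hp : Even p) (hp₀ : 0 < p) :
    Integrable fun x : ℝ => x ^ n * exp (-x ^ p) :=
  integrable_of_integrableOn_Ioi_of_even (fun x => by rw [hn.neg_pow, hp.neg_pow])
    (integrableOn_Ioi_pow_mul_exp_neg_pow n hp₀)

theorem integral_pow_mul_exp_neg_pow {n p : ℕ} (hn : Even n) (hp : Even p) (hp₀ : 0 < p) :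
    ∫ x : ℝ, x ^ n * exp (-x ^ p) = 2 * Gamma ((n + 1) / p) / p := by
  have h := integral_comp_abs (f := fun x : ℝ => x ^ n * exp (-x ^ p))
  simp only [hn.pow_abs, hp.pow_abs] at h
  rw [h, integral_Ioi_pow_mul_exp_neg_pow n hp₀]
  ring

theorem hasSum_integral_mul_cos {f : ℝ → ℝ} (U : ℝ)
    (hf : ∀ n : ℕ, Integrable fun x => x ^ (2 * n) * f x)
    (hsum : Summable fun n : ℕ => U ^ (2 * n) / (2 * n)! * ∫ x, |x ^ (2 * n) * f x|) :
    HasSum (fun n : ℕ => (-1) ^ n * U ^ (2 * n) / (2 * n)! * ∫ x, x ^ (2 * n) * f x)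
      (∫ x, f x * cos (x * U)) := by
  set F : ℕ → ℝ → ℝ := fun n x => (-1) ^ n * U ^ (2 * n) / (2 * n)! * (x ^ (2 * n) * f x)
  have hF_norm (n : ℕ) : ∫ x, ‖F n x‖ = U ^ (2 * n) / (2 * n)! * ∫ x, |x ^ (2 * n) * f x| := by
    rw [← integral_const_mul]
    congr 1 with x
    simp [F, abs_mul, (even_two_mul n).pow_abs]
  have hF_sum (x : ℝ) : ∑' n, F n x = f x * cos (x * U) := by
    rw [← ((hasSum_cos (x * U)).mul_left (f x)).tsum_eq]
    congr 1 with n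
    simp only [F, mul_pow]
    ring
  have h := hasSum_integral_of_summable_integral_norm (F := F) (fun n => (hf n).const_mul _)
    (by simpa only [hF_norm] using hsum)
  simpa only [F, hF_sum, integral_const_mul] using h

theorem summable_pow_div_factorial_mul_Gamma (U : ℝ) :
    Summable fun n : ℕ => U ^ (2 * n) / (2 * n)! * Gamma ((2 * n + 1) / 4) := by
  rw [← summable_nat_add_iff 4]
  refine ((summable_nat_add_iff 4).mpr (Real.summable_pow_div_factorial (U ^ 2))).of_nonneg_of_le
    (fun n => mul_nonneg (div_nonneg ((even_two_mul _).pow_nonneg U) (by positivity))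
      (Gamma_pos_of_pos (by positivity)).le) fun n => ?_
  set m := n + 4
  have hfac : ((m ! : ℝ)) * m ! ≤ (2 * m)! := by
    exact_mod_cast Nat.le_of_dvd (Nat.factorial_pos _)
      (two_mul m ▸ Nat.factorial_mul_factorial_dvd_factorial_add m m)
  have hm : (4 : ℝ) ≤ m := by exact_mod_cast Nat.le_add_left 4 n
  have hΓ : Gamma ((2 * m + 1) / 4) ≤ m ! := Gamma_le_factorial (by linarith) (by linarith)
  calc U ^ (2 * m) / (2 * m)! * Gamma ((2 * m + 1) / 4)
      ≤ (U ^ 2) ^ m / (m ! * m !) * m ! := by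
        rw [pow_mul]
        gcongr
    _ = (U ^ 2) ^ m / m ! := by field_simp

theorem integral_pow_two_mul_mul_exp_neg_pow_four (n : ℕ) :
    ∫ x : ℝ, x ^ (2 * n) * exp (-x ^ 4) = Gamma ((2 * n + 1) / 4) / 2 := by
  rw [integral_pow_mul_exp_neg_pow (even_two_mul n) (by decide) (by norm_num)]
  push_cast
  ring

/-- The term `(-1)ⁿ U²ⁿ / (2n)! · ∫ Q²ⁿ exp (-Q⁴) dQ` of the integrated cosine series. -/
noncomputable def phiCoeff (U : ℝ) (n : ℕ) : ℝ :=
  (-1) ^ n * U ^ (2 * n) / (2 * n)! * (Gamma ((2 * n + 1) / 4) / 2)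

theorem hasSum_phiCoeff (U : ℝ) :
    HasSum (phiCoeff U) (∫ Q : ℝ, exp (-Q ^ 4) * cos (Q * U)) := by
  have hsum := hasSum_integral_mul_cos (f := fun x => exp (-x ^ 4)) U
    (fun n => integrable_pow_mul_exp_neg_pow (even_two_mul n) (by decide) (by norm_num)) ?_
  · simp only [integral_pow_two_mul_mul_exp_neg_pow_four] at hsum
    exact hsum
  · have habs (n : ℕ) (x : ℝ) : |x ^ (2 * n) * exp (-x ^ 4)| = x ^ (2 * n) * exp (-x ^ 4) :=
      abs_of_nonneg (mul_nonneg ((even_two_mul n).pow_nonneg x) (exp_pos _).le)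
    simpa only [habs, integral_pow_two_mul_mul_exp_neg_pow_four, mul_div_assoc'] using
      (summable_pow_div_factorial_mul_Gamma U).div_const 2

theorem summable_abs_phiCoeff (U : ℝ) : Summable fun n => |phiCoeff U n| := by
  refine ((summable_pow_div_factorial_mul_Gamma U).div_const 2).congr fun n => ?_
  have hΓ : 0 < Gamma ((2 * n + 1) / 4) / 2 :=
    half_pos (Gamma_pos_of_pos (by positivity))
  simp only [phiCoeff, abs_mul, abs_div, abs_pow, abs_neg, abs_one, one_pow, one_mul,
    (even_two_mul n).pow_abs, Nat.abs_cast, abs_of_pos hΓ]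
  ring

theorem phiCoeff_two_mul (U : ℝ) (k : ℕ) :
    phiCoeff U (2 * k) = 2 * Gamma (5 / 4) * hyperTerm₁ U k := by
  have hfac : ((2 * (2 * k))! : ℝ) = 4 ^ (4 * k) * (ascPochhammer ℝ k).eval (1 / 4) *
      ((ascPochhammer ℝ k).eval (1 / 2) * (ascPochhammer ℝ k).eval (3 / 4) * k !) := by
    have h := factorial_mul_add_eq_prod_ascPochhammer 4 k 0
    norm_num [prod_range_succ, ascPochhammer_eval_one] at h
    rw [show 2 * (2 * k) = 4 * k by ring, h]
    ring
  have hΓ : Gamma ((2 * ((2 * k : ℕ) : ℝ) + 1) / 4) =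
      (ascPochhammer ℝ k).eval (1 / 4) * (4 * Gamma (5 / 4)) := by
    rw [show (2 * ((2 * k : ℕ) : ℝ) + 1) / 4 = 1 / 4 + k by push_cast; ring,
      Gamma_add_nat_eq_ascPochhammer_mul (fun n => by positivity),
      show (5 / 4 : ℝ) = 1 / 4 + 1 by norm_num, Gamma_add_one (by norm_num)]
    ring
  have h14 := ascPochhammer_pos k (1 / 4 : ℝ) (by norm_num)
  rw [phiCoeff, hfac, hΓ, hyperTerm₁, pow_mul, neg_one_sq, one_pow, div_pow]
  field_simp
  ring

theorem phiCoeff_two_mul_add_one (U : ℝ) (k : ℕ) :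
    phiCoeff U (2 * k + 1) = -(U ^ 2 * Gamma (3 / 4) / 4) * hyperTerm₂ U k := by
  have hfac : ((2 * (2 * k + 1))! : ℝ) = 2 * 4 ^ (4 * k) * (ascPochhammer ℝ k).eval (3 / 4) *
      ((ascPochhammer ℝ k).eval (5 / 4) * (ascPochhammer ℝ k).eval (3 / 2) * k !) := by
    have h := factorial_mul_add_eq_prod_ascPochhammer 4 k 2
    norm_num [prod_range_succ, ascPochhammer_eval_one] at h
    rw [show 2 * (2 * k + 1) = 4 * k + 2 by ring, h]
    ring
  have hΓ : Gamma ((2 * ((2 * k + 1 : ℕ) : ℝ) + 1) / 4) =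
      (ascPochhammer ℝ k).eval (3 / 4) * Gamma (3 / 4) := by
    rw [show (2 * ((2 * k + 1 : ℕ) : ℝ) + 1) / 4 = 3 / 4 + k by push_cast; ring,
      Gamma_add_nat_eq_ascPochhammer_mul (fun n => by positivity)]
  have h34 := ascPochhammer_pos k (3 / 4 : ℝ) (by norm_num)
  rw [phiCoeff, hfac, hΓ, hyperTerm₂, pow_succ, pow_mul, neg_one_sq, one_pow, div_pow]
  field_simp
  ring

theorem abs_hyperTerm₂_le (U : ℝ) (k : ℕ) : |hyperTerm₂ U k| ≤ |hyperTerm₁ U k| := by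
  have hle₁ := ascPochhammer_eval_le_eval k (s := (1 / 2 : ℝ)) (t := 5 / 4) (by norm_num)
    (by norm_num)
  have hle₂ := ascPochhammer_eval_le_eval k (s := (3 / 4 : ℝ)) (t := 3 / 2) (by norm_num)
    (by norm_num)
  have h12 := ascPochhammer_pos k (1 / 2 : ℝ) (by norm_num)
  have h34 := ascPochhammer_pos k (3 / 4 : ℝ) (by norm_num)
  have h54 := (ascPochhammer_pos k (5 / 4 : ℝ) (by norm_num)).le
  have hD₁ : 0 < (ascPochhammer ℝ k).eval (1 / 2) * (ascPochhammer ℝ k).eval (3 / 4) * k ! := by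
    positivity
  have hD₂ : 0 < (ascPochhammer ℝ k).eval (5 / 4) * (ascPochhammer ℝ k).eval (3 / 2) * k ! :=
    hD₁.trans_le (by gcongr)
  rw [hyperTerm₁, hyperTerm₂, abs_div, abs_div, abs_of_pos hD₁, abs_of_pos hD₂]
  gcongr

/-- Hypergeometric expression of the attractor: for every real `U`, both series converge
absolutely and
`φ(U) = (Γ(5/4)/π) ₀H₂({1/2,3/4},(U/4)⁴) − (U² Γ(3/4)/(8π)) ₀H₂({5/4,3/2},(U/4)⁴)`. -/
theorem phiFn_hypergeometric (U : ℝ) :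
    (Summable fun k : ℕ => |hyperTerm₁ U k|) ∧
    (Summable fun k : ℕ => |hyperTerm₂ U k|) ∧
    phiFn U = Real.Gamma (5 / 4) / Real.pi * ∑' k : ℕ, hyperTerm₁ U k
      - U ^ 2 * Real.Gamma (3 / 4) / (8 * Real.pi) * ∑' k : ℕ, hyperTerm₂ U k := by
  have hc := summable_abs_phiCoeff U
  have heven : Summable fun k => |phiCoeff U (2 * k)| :=
    hc.comp_injective (mul_right_injective₀ two_ne_zero)
  have hodd : Summable fun k => |phiCoeff U (2 * k + 1)| :=
    hc.comp_injective ((add_left_injective 1).comp (mul_right_injective₀ two_ne_zero))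
  have hΓ : 2 * Gamma (5 / 4) ≠ 0 := mul_ne_zero two_ne_zero (Gamma_pos_of_pos (by norm_num)).ne'
  have h₁ : Summable fun k => |hyperTerm₁ U k| := by
    simp only [phiCoeff_two_mul] at heven
    exact ((summable_mul_left_iff hΓ).mp heven.of_abs).abs
  refine ⟨h₁, h₁.of_nonneg_of_le (fun k => abs_nonneg _) (abs_hyperTerm₂_le U), ?_⟩
  rw [phiFn, ← (hasSum_phiCoeff U).tsum_eq, ← tsum_even_add_odd heven.of_abs hodd.of_abs]
  simp only [phiCoeff_two_mul, phiCoeff_two_mul_add_one, tsum_mul_left]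
  field_simp
  ring
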